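/- For every h > (2π·C₃/3)·σ, the relative discrepancy between the intrinsic rate and the rescaled 3D mesoscopic rate satisfies 0 < (k_r − h³·ρ³(k_r,h))/k_r < k_r/(k_r + 4π·σ·D) = k_CK/(4π·σ·D), where k_CK = 4π·σ·D·k_r/(4π·σ·D + k_r). In particular, the relative error is uniformly bounded in h by k_CK/(4π·σ·D). -/
import Mathlib


/-- The constant `C₃ ≈ 1.5164` from the 3D mesoscopic rate expression. -/
noncomputable def C3 : ℝ := 1.5164

/-- `G³(h) = 1/(4π·σ) − C₃/(6h)`. -/
noncomputable def G3 (σ h : ℝ) : ℝ := 1 / (4 * Real.pi * σ) - C3 / (6 * h)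

/-- The 3D mesoscopic association rate `ρ³(k_r,h) = (k_r/h³)·(1+(k_r/D)·G³(h))⁻¹`. -/
noncomputable def rho3 (σ D kr h : ℝ) : ℝ :=
  (kr / h ^ 3) * (1 + (kr / D) * G3 σ h)⁻¹

/-- The Collins–Kimball rate `k_CK = 4π·σ·D·k_r/(4π·σ·D + k_r)`. -/
noncomputable def kCK (σ D kr : ℝ) : ℝ :=
  4 * Real.pi * σ * D * kr / (4 * Real.pi * σ * D + kr)

theorem stmt_17 (σ D kr : ℝ) (hσ : 0 < σ) (hD : 0 < D) (hkr : 0 < kr) :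
    ∀ h : ℝ, (2 * Real.pi * C3 / 3) * σ < h →
      0 < (kr - h ^ 3 * rho3 σ D kr h) / kr ∧
      (kr - h ^ 3 * rho3 σ D kr h) / kr < kr / (kr + 4 * Real.pi * σ * D) ∧
      kr / (kr + 4 * Real.pi * σ * D) = kCK σ D kr / (4 * Real.pi * σ * D) := by
  intro h hh
  have hπ := Real.pi_pos
  have hC3 : (0:ℝ) < C3 := by norm_num [C3]
  have hh0 : 0 < h := lt_trans (by positivity) hh
  have hg1 : C3 / (6 * h) < 1 / (4 * Real.pi * σ) := by
    rw [div_lt_div_iff₀ (by positivity) (by positivity)]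
    nlinarith
  have hg0 : 0 < G3 σ h := by
    have : 0 < C3 / (6 * h) := by positivity
    simp only [G3]; linarith
  have hg2 : G3 σ h < 1 / (4 * Real.pi * σ) := by
    have : 0 < C3 / (6 * h) := by positivity
    simp only [G3]; linarith
  set g := G3 σ h with hgdef
  have hA : 0 < kr / D * g := by positivity
  have h1A : 0 < 1 + kr / D * g := by linarith
  have hval : (kr - h ^ 3 * rho3 σ D kr h) / kr = (kr / D * g) / (1 + kr / D * g) := by
    rw [rho3, ← hgdef]
    field_simp
    ring
  rw [hval]
  have hkd : kr / D * D = kr := div_mul_cancel₀ kr hD.ne'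
  have hm : g * (4 * Real.pi * σ) < 1 := by
    rw [← lt_div_iff₀ (by positivity)]; simpa using hg2
  refine ⟨by positivity, ?_, ?_⟩
  · rw [div_lt_div_iff₀ h1A (by positivity)]
    nlinarith [mul_lt_mul_of_pos_left hm hkr, mul_pos hA hkr]
  · rw [kCK]
    field_simp
    ring
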